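/- arXiv:math/0412041 — 2 statements merged into one kernel-verified Lean document; each statement's English description precedes it below -/
import Mathlib

section
/- For n ≥ 1, the Hankel determinant det[s_{i+j-1}]_{1≤i,j≤n} of the small Schröder numbers equals 2^{n(n-1)/2}. -/
open Matrix

/-- A lattice point in the plane. -/
abbrev Pt := ℤ × ℤ

/-- The points visited by a path starting at `p` taking steps `l`. -/
def pts (p : Pt) (l : List Pt) : List Pt := l.scanl (· + ·) p

/-- The endpoint of a path starting at `p` taking steps `l`. -/
def endpt (p : Pt) (l : List Pt) : Pt := l.foldl (· + ·) p

/-- `l` is the step list of a large Schröder path from `p` to `q`: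
steps are U=(1,1), D=(1,-1), L=(2,0) and the path never goes below the x-axis. -/
def IsLargePath (p q : Pt) (l : List Pt) : Prop :=
  (∀ s ∈ l, s = (1, 1) ∨ s = (1, -1) ∨ s = (2, 0)) ∧
  (∀ v ∈ pts p l, 0 ≤ v.2) ∧
  endpt p l = q

/-- A small Schröder path: a large Schröder path with no level step on the x-axis. -/
def IsSmallPath (p q : Pt) (l : List Pt) : Prop :=
  IsLargePath p q l ∧
  ∀ (i : ℕ) (h : i < l.length), l.get ⟨i, h⟩ = (2, 0) → (endpt p (l.take i)).2 ≠ 0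

/-- The `k`-th large Schröder number: the number of large Schröder paths
from `(0,0)` to `(2k,0)`. -/
noncomputable def schR (k : ℕ) : ℕ := Nat.card {l : List Pt // IsLargePath (0, 0) (2 * k, 0) l}

/-- The `k`-th small Schröder number: the number of small Schröder paths
from `(0,0)` to `(2k,0)`. -/
noncomputable def schS (k : ℕ) : ℕ := Nat.card {l : List Pt // IsSmallPath (0, 0) (2 * k, 0) l}

/-- `Π n`: `n`-tuples of pairwise non-intersecting large Schröder paths where the
`i`-th path (1-indexed; here index `i : Fin n` stands for `i+1`) runs from
`(-2(i+1)+1, 0)` to `(2(i+1)-1, 0)`. -/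
def PiSet (n : ℕ) : Set (Fin n → List Pt) :=
  {π | (∀ i : Fin n, IsLargePath (-(2 * (i : ℤ) + 1), 0) (2 * (i : ℤ) + 1, 0) (π i)) ∧
    ∀ i j : Fin n, i ≠ j → ∀ v ∈ pts (-(2 * (i : ℤ) + 1), 0) (π i),
      v ∉ pts (-(2 * (j : ℤ) + 1), 0) (π j)}

/-- `Ω n`: the analogous tuples of small Schröder paths. -/
def OmegaSet (n : ℕ) : Set (Fin n → List Pt) :=
  {ω | (∀ i : Fin n, IsSmallPath (-(2 * (i : ℤ) + 1), 0) (2 * (i : ℤ) + 1, 0) (ω i)) ∧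
    ∀ i j : Fin n, i ≠ j → ∀ v ∈ pts (-(2 * (i : ℤ) + 1), 0) (ω i),
      v ∉ pts (-(2 * (j : ℤ) + 1), 0) (ω j)}

/-- `Π* n`: `n`-tuples `(μ₀,…,μ_{n-1})` of pairwise non-intersecting large Schröder
paths with `μ i` from `(-2i,0)` to `(2i,0)`. -/
def PiStarSet (n : ℕ) : Set (Fin n → List Pt) :=
  {μ | (∀ i : Fin n, IsLargePath (-(2 * (i : ℤ)), 0) (2 * (i : ℤ), 0) (μ i)) ∧
    ∀ i j : Fin n, i ≠ j → ∀ v ∈ pts (-(2 * (i : ℤ)), 0) (μ i),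
      v ∉ pts (-(2 * (j : ℤ)), 0) (μ j)}

/-- `Ω* n`: the analogous tuples of small Schröder paths. -/
def OmegaStarSet (n : ℕ) : Set (Fin n → List Pt) :=
  {μ | (∀ i : Fin n, IsSmallPath (-(2 * (i : ℤ)), 0) (2 * (i : ℤ), 0) (μ i)) ∧
    ∀ i j : Fin n, i ≠ j → ∀ v ∈ pts (-(2 * (i : ℤ)), 0) (μ i),
      v ∉ pts (-(2 * (j : ℤ)), 0) (μ j)}

/-- The unit square with lower-left corner `c` lies in the Aztec diamond `Az(n)`,
i.e. all four of its corners `(x,y)` satisfy `|x| + |y| ≤ n + 1`. -/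
def aztecCell (n : ℕ) (c : Pt) : Prop :=
  |c.1| + |c.2| ≤ (n : ℤ) + 1 ∧ |c.1 + 1| + |c.2| ≤ (n : ℤ) + 1 ∧
  |c.1| + |c.2 + 1| ≤ (n : ℤ) + 1 ∧ |c.1 + 1| + |c.2 + 1| ≤ (n : ℤ) + 1

/-- Two unit squares (given by lower-left corners) are edge-adjacent,
so together they form a 1×2 or 2×1 domino. -/
def adjCell (c d : Pt) : Prop :=
  d = (c.1 + 1, c.2) ∨ d = (c.1 - 1, c.2) ∨ d = (c.1, c.2 + 1) ∨ d = (c.1, c.2 - 1)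

/-- A domino tiling of `Az(n)`, encoded as the involution matching each cell of the
diamond with the other cell of its domino (and fixing everything outside). -/
def IsAztecTiling (n : ℕ) (m : Pt → Pt) : Prop :=
  (∀ c, aztecCell n c → aztecCell n (m c) ∧ adjCell c (m c) ∧ m (m c) = c) ∧
  ∀ c, ¬ aztecCell n c → m c = c

/-- The number of domino tilings of the Aztec diamond of order `n`. -/
noncomputable def aztecTilingCount (n : ℕ) : ℕ := Nat.card {m : Pt → Pt // IsAztecTiling n m}

/-- The map sending `(π₁,…,π_{n-1})` to `(μ₀,…,μ_{n-1})` with `μ₀` the empty path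
at the origin and `μᵢ = U πᵢ D`. -/
def extendStar {n : ℕ} (π : Fin (n - 1) → List Pt) (i : Fin n) : List Pt :=
  if h : (i : ℕ) = 0 then []
  else (1, 1) :: π ⟨(i : ℕ) - 1, by omega⟩ ++ [(1, -1)]

/-!
Splitting a Schröder path at its first return to the axis gives, for the small and large
Schröder numbers, `s (k + 1) = ∑_{i + j = k} r i * s j` and
`r (k + 1) = r k + ∑_{i + j = k} r i * r j`. These recursions identify `s (k + 1)` with the total
weight `m k` of the Motzkin paths of length `k` whose level steps weigh `3` and down steps `2`
(the Jacobi continued fraction of the generating function). Cutting a Motzkin path after `i`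
steps and reversing the rest gives `m (i + j) = ∑ h, A i h * 2 ^ h * A j h`, where `A i h` is
the weight of the paths from `0` to height `h` in `i` steps. The matrix `A` is unitriangular,
so the Hankel determinant is `∏_{h < n} 2 ^ h`.
-/

open Finset

/-- The steps `l` are Schröder steps, and the path they trace from height `y` stays weakly above
the x-axis after its starting point. -/
def LargeFrom : ℤ → List Pt → Prop
  | _, [] => True
  | y, s :: l => (s = (1, 1) ∨ s = (1, -1) ∨ s = (2, 0)) ∧ 0 ≤ y + s.2 ∧ LargeFrom (y + s.2) l

def NoLevelOnAxis : ℤ → List Pt → Prop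
  | _, [] => True
  | y, s :: l => (s = (2, 0) → y ≠ 0) ∧ NoLevelOnAxis (y + s.2) l

lemma isLargePath_iff {p q : Pt} {l : List Pt} :
    IsLargePath p q l ↔ 0 ≤ p.2 ∧ LargeFrom p.2 l ∧ p + l.sum = q := by
  induction l generalizing p with
  | nil => simp [IsLargePath, LargeFrom, pts, endpt]
  | cons s l ih =>
    have hcons : IsLargePath p q (s :: l) ↔
        (s = (1, 1) ∨ s = (1, -1) ∨ s = (2, 0)) ∧ 0 ≤ p.2 ∧ IsLargePath (p + s) q l := by
      simp only [IsLargePath, pts, endpt, List.scanl_cons, List.foldl_cons, List.forall_mem_cons]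
      tauto
    rw [hcons, ih]
    simp only [LargeFrom, List.sum_cons, Prod.snd_add, add_assoc]
    tauto

lemma noLevelOnAxis_iff {p : Pt} {l : List Pt} : NoLevelOnAxis p.2 l ↔
    ∀ (i : ℕ) (h : i < l.length), l.get ⟨i, h⟩ = (2, 0) → (endpt p (l.take i)).2 ≠ 0 := by
  induction l generalizing p with
  | nil => simp [NoLevelOnAxis]
  | cons s l ih =>
    rw [NoLevelOnAxis, show p.2 + s.2 = (p + s).2 from rfl, ih]
    constructor
    · rintro ⟨h0, hl⟩ (_ | i) hi hget
      · exact h0 hget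
      · exact hl i (by simpa using hi) hget
    · intro h
      exact ⟨fun hs => h 0 (by simp) hs, fun i hi hget => h (i + 1) (by simpa using hi) hget⟩

lemma isSmallPath_iff {p q : Pt} {l : List Pt} :
    IsSmallPath p q l ↔ IsLargePath p q l ∧ NoLevelOnAxis p.2 l := by
  rw [IsSmallPath, noLevelOnAxis_iff]

lemma largeFrom_append {y : ℤ} {a b : List Pt} :
    LargeFrom y (a ++ b) ↔ LargeFrom y a ∧ LargeFrom (y + a.sum.2) b := by
  induction a generalizing y with
  | nil => simp [LargeFrom]
  | cons s a ih => simp [LargeFrom, ih, add_assoc, and_assoc]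

lemma noLevelOnAxis_append {y : ℤ} {a b : List Pt} :
    NoLevelOnAxis y (a ++ b) ↔ NoLevelOnAxis y a ∧ NoLevelOnAxis (y + a.sum.2) b := by
  induction a generalizing y with
  | nil => simp [NoLevelOnAxis]
  | cons s a ih => simp [NoLevelOnAxis, ih, add_assoc, and_assoc]

namespace LargeFrom

lemma mono {y y' : ℤ} {l : List Pt} (h : LargeFrom y l) (hy : y ≤ y') : LargeFrom y' l := by
  induction l generalizing y y' with
  | nil => trivial
  | cons s l ih => exact ⟨h.1, by linarith [h.2.1], ih h.2.2 (by linarith)⟩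

lemma noLevelOnAxis_add_one {y : ℤ} {l : List Pt} (h : LargeFrom y l) (hy : 0 ≤ y) :
    NoLevelOnAxis (y + 1) l := by
  induction l generalizing y with
  | nil => trivial
  | cons s l ih =>
    refine ⟨fun _ => by omega, ?_⟩
    rw [add_right_comm]
    exact ih h.2.2 h.2.1

lemma exists_sum_fst_eq {y : ℤ} {l : List Pt} (h : LargeFrom y l) :
    ∃ m : ℕ, l.sum.1 = 2 * m + l.sum.2 := by
  induction l generalizing y with
  | nil => exact ⟨0, by simp⟩
  | cons s l ih =>
    obtain ⟨m, hm⟩ := ih h.2.2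
    rcases h.1 with rfl | rfl | rfl
    · exact ⟨m, by simp [hm]; ring⟩
    · exact ⟨m + 1, by simp [hm]; ring⟩
    · exact ⟨m + 1, by simp [hm]; ring⟩

/-- Cut a path from height `y + 1` to the axis at its first visit to the axis. Before that visit
it stays at height `≥ 1`, which `LargeFrom y a` expresses by shifting heights down by one. -/
lemma exists_eq_append_down {y : ℤ} {t : List Pt} (ht : LargeFrom (y + 1) t) (hy : 0 ≤ y)
    (hend : y + 1 + t.sum.2 = 0) : ∃ a b, t = a ++ (1, -1) :: b ∧
      LargeFrom y a ∧ y + a.sum.2 = 0 ∧ LargeFrom 0 b ∧ b.sum.2 = 0 := by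
  induction t generalizing y with
  | nil => simp at hend; omega
  | cons s r ih =>
    obtain ⟨hs, hpos, hr⟩ := ht
    simp only [List.sum_cons, Prod.snd_add] at hend
    by_cases hdown : y + 1 + s.2 = 0
    · obtain rfl : s = (1, -1) := by rcases hs with rfl | rfl | rfl <;> simp at hdown ⊢ <;> omega
      refine ⟨[], r, rfl, trivial, by simp at hdown ⊢; omega, ?_, by omega⟩
      rwa [hdown] at hr
    · obtain ⟨a, b, rfl, ha, ha0, hb, hb0⟩ :=
        ih (y := y + s.2) (by rwa [add_right_comm]) (by omega) (by linarith)
      exact ⟨s :: a, b, rfl, ⟨hs, by omega, ha⟩, by simp; linarith, hb, hb0⟩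

lemma append_down_inj {y : ℤ} {a a' b b' : List Pt} (ha : LargeFrom y a) (ha0 : y + a.sum.2 = 0)
    (ha' : LargeFrom y a') (ha'0 : y + a'.sum.2 = 0) (h : a ++ (1, -1) :: b = a' ++ (1, -1) :: b') :
    a = a' ∧ b = b' := by
  induction a generalizing y a' with
  | nil =>
    cases a' with
    | nil => simpa using h
    | cons s' a' =>
      obtain ⟨rfl, -⟩ := List.cons_eq_cons.1 h
      have := ha'.2.1; simp at ha0 this; omega
  | cons s a ih =>
    cases a' with
    | nil =>
      obtain ⟨rfl, -⟩ := List.cons_eq_cons.1 h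
      have := ha.2.1; simp at ha'0 this; omega
    | cons s' a' =>
      obtain ⟨rfl, htail⟩ := List.cons_eq_cons.1 h
      simp only [List.sum_cons, Prod.snd_add] at ha0 ha'0
      obtain ⟨rfl, rfl⟩ := ih ha.2.2 (by linarith) ha'.2.2 (by linarith) htail
      exact ⟨rfl, rfl⟩

end LargeFrom

def IsExcursion (l : List Pt) : Prop := LargeFrom 0 l ∧ l.sum.2 = 0

def arch (a b : List Pt) : List Pt := (1, 1) :: (a ++ (1, -1) :: b)

lemma sum_arch (a b : List Pt) : (arch a b).sum = a.sum + b.sum + (2, 0) := by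
  ext <;> simp [arch] <;> ring

lemma isExcursion_arch {a b : List Pt} (ha : IsExcursion a) (hb : IsExcursion b) :
    IsExcursion (arch a b) := by
  refine ⟨⟨Or.inl rfl, by norm_num, ?_⟩, by simp [sum_arch, ha.2, hb.2]⟩
  rw [largeFrom_append]
  exact ⟨ha.1.mono (by norm_num), Or.inr (Or.inl rfl), by simp [ha.2], by simpa [ha.2] using hb.1⟩

lemma noLevelOnAxis_arch_iff {a b : List Pt} (ha : IsExcursion a) :
    NoLevelOnAxis 0 (arch a b) ↔ NoLevelOnAxis 0 b := by
  have : NoLevelOnAxis 1 a := by simpa using ha.1.noLevelOnAxis_add_one le_rfl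
  simp [arch, NoLevelOnAxis, noLevelOnAxis_append, ha.2, this]

lemma arch_inj {a a' b b' : List Pt} (ha : IsExcursion a) (ha' : IsExcursion a') :
    arch a b = arch a' b' ↔ a = a' ∧ b = b' := by
  refine ⟨fun h => LargeFrom.append_down_inj ha.1 ?_ ha'.1 ?_ (List.cons_injective h), ?_⟩
  · simpa using ha.2
  · simpa using ha'.2
  · rintro ⟨rfl, rfl⟩; rfl

namespace IsExcursion

variable {l : List Pt}

lemma eq_nil_or (hl : IsExcursion l) :
    l = [] ∨ (∃ t, l = (2, 0) :: t ∧ IsExcursion t) ∨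
      ∃ a b, l = arch a b ∧ IsExcursion a ∧ IsExcursion b := by
  obtain ⟨hl, hl0⟩ := hl
  cases l with
  | nil => exact Or.inl rfl
  | cons s t =>
    obtain ⟨hs, hpos, ht⟩ := hl
    simp only [List.sum_cons, Prod.snd_add] at hl0
    rcases hs with rfl | rfl | rfl
    · obtain ⟨a, b, rfl, ha, ha0, hb, hb0⟩ :=
        LargeFrom.exists_eq_append_down (y := 0) (by simpa using ht) le_rfl
          (by simp at hl0 ⊢; omega)
      exact Or.inr (Or.inr ⟨a, b, rfl, ⟨ha, by simpa using ha0⟩, hb, hb0⟩)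
    · norm_num at hpos
    · exact Or.inr (Or.inl ⟨t, rfl, by simpa using ht, by simpa using hl0⟩)

lemma exists_sum_fst_eq (hl : IsExcursion l) : ∃ m : ℕ, l.sum.1 = 2 * m := by
  simpa [hl.2] using hl.1.exists_sum_fst_eq

end IsExcursion

def largePaths (k : ℕ) : Set (List Pt) := {l | IsExcursion l ∧ l.sum.1 = 2 * k}

def smallPaths (k : ℕ) : Set (List Pt) := {l | l ∈ largePaths k ∧ NoLevelOnAxis 0 l}

lemma schR_eq_card (k : ℕ) : schR k = Nat.card (largePaths k) :=
  Nat.card_congr <| Equiv.subtypeEquivRight fun l => by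
    simp [isLargePath_iff, largePaths, IsExcursion, Prod.ext_iff]
    tauto

lemma schS_eq_card (k : ℕ) : schS k = Nat.card (smallPaths k) :=
  Nat.card_congr <| Equiv.subtypeEquivRight fun l => by
    simp [isSmallPath_iff, isLargePath_iff, smallPaths, largePaths, IsExcursion, Prod.ext_iff]
    tauto

lemma largePaths_zero : largePaths 0 = {[]} := by
  ext l
  refine ⟨fun ⟨hl, hl0⟩ => ?_, by rintro rfl; exact ⟨⟨trivial, rfl⟩, rfl⟩⟩
  rcases hl.eq_nil_or with rfl | ⟨t, rfl, ht⟩ | ⟨a, b, rfl, ha, hb⟩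
  · rfl
  · obtain ⟨m, hm⟩ := ht.exists_sum_fst_eq
    simp at hl0; omega
  · obtain ⟨m, hm⟩ := ha.exists_sum_fst_eq
    obtain ⟨m', hm'⟩ := hb.exists_sum_fst_eq
    simp [sum_arch] at hl0; omega

lemma smallPaths_zero : smallPaths 0 = {[]} := by
  ext l
  simp only [smallPaths, largePaths_zero, Set.mem_ofPred_eq, Set.mem_singleton_iff]
  exact ⟨And.left, by rintro rfl; exact ⟨rfl, trivial⟩⟩

def archMap (k : ℕ) (B : ℕ → Set (List Pt))
    (x : Σ p : antidiagonal k, largePaths p.1.1 × B p.1.2) : List Pt :=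
  arch x.2.1 x.2.2

lemma archMap_injective (k : ℕ) (B : ℕ → Set (List Pt)) : Function.Injective (archMap k B) := by
  rintro ⟨p, a, b⟩ ⟨p', a', b'⟩ h
  obtain ⟨ha, hb⟩ := (arch_inj a.2.1 a'.2.1).1 h
  obtain rfl : p = p' := HasAntidiagonal.antidiagonal_subtype_ext <| by
    have := a.2.2; have := a'.2.2; rw [ha] at *; omega
  obtain rfl := Subtype.ext ha
  obtain rfl := Subtype.ext hb
  rfl

lemma arch_mem_range_archMap {k : ℕ} {B : ℕ → Set (List Pt)} {a b : List Pt}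
    (ha : IsExcursion a) (hb : IsExcursion b) (hB : ∀ j : ℕ, b.sum.1 = 2 * j → b ∈ B j)
    (hsum : (arch a b).sum.1 = 2 * (k + 1 : ℕ)) : arch a b ∈ Set.range (archMap k B) := by
  obtain ⟨i, hi⟩ := ha.exists_sum_fst_eq
  obtain ⟨j, hj⟩ := hb.exists_sum_fst_eq
  have hij : (i, j) ∈ antidiagonal k := by simp [sum_arch] at hsum; simp; omega
  exact ⟨⟨⟨(i, j), hij⟩, ⟨a, ha, hi⟩, ⟨b, hB j hj⟩⟩, rfl⟩

lemma range_archMap_smallPaths (k : ℕ) :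
    Set.range (archMap k smallPaths) = smallPaths (k + 1) := by
  ext l
  constructor
  · rintro ⟨⟨p, a, b, ⟨hb, hb1⟩, hb2⟩, rfl⟩
    refine ⟨⟨isExcursion_arch a.2.1 hb, ?_⟩, (noLevelOnAxis_arch_iff a.2.1).2 hb2⟩
    have := a.2.2; have := mem_antidiagonal.1 p.2
    simp [archMap, sum_arch] at *; omega
  · rintro ⟨⟨hl, hl1⟩, hl2⟩
    rcases hl.eq_nil_or with rfl | ⟨t, rfl, -⟩ | ⟨a, b, rfl, ha, hb⟩
    · simp at hl1; omega
    · exact (hl2.1 rfl rfl).elim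
    · exact arch_mem_range_archMap ha hb
        (fun j hj => ⟨⟨hb, hj⟩, (noLevelOnAxis_arch_iff ha).1 hl2⟩) hl1

def levelCons (k : ℕ) (l : largePaths k) : List Pt := (2, 0) :: l

lemma range_sumElim_largePaths (k : ℕ) :
    Set.range (Sum.elim (levelCons k) (archMap k largePaths)) = largePaths (k + 1) := by
  ext l
  constructor
  · rintro ⟨⟨t, ht, ht1⟩ | ⟨p, a, b⟩, rfl⟩
    · refine ⟨⟨⟨Or.inr (Or.inr rfl), le_rfl, by simpa using ht.1⟩,
        by simpa [levelCons] using ht.2⟩, ?_⟩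
      simp [levelCons, ht1]; ring
    · refine ⟨isExcursion_arch a.2.1 b.2.1, ?_⟩
      have := a.2.2; have := b.2.2; have := mem_antidiagonal.1 p.2
      simp [archMap, sum_arch] at *; omega
  · rintro ⟨hl, hl1⟩
    rcases hl.eq_nil_or with rfl | ⟨t, rfl, ht⟩ | ⟨a, b, rfl, ha, hb⟩
    · simp at hl1; omega
    · exact ⟨Sum.inl (⟨t, ht, by simp at hl1; omega⟩ : largePaths k), rfl⟩
    · obtain ⟨x, hx⟩ := arch_mem_range_archMap (B := largePaths) ha hb (fun j hj => ⟨hb, hj⟩) hl1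
      exact ⟨Sum.inr x, hx⟩

lemma sumElim_levelCons_archMap_injective (k : ℕ) :
    Function.Injective (Sum.elim (levelCons k) (archMap k largePaths)) :=
  Function.Injective.sumElim (fun _ _ h => Subtype.ext (List.cons_injective h))
    (archMap_injective k _) fun _ _ h => by simp [levelCons, archMap, arch] at h

lemma finite_largePaths (k : ℕ) : (largePaths k).Finite := by
  induction k using Nat.strong_induction_on with
  | _ k ih =>
  cases k with
  | zero => simp [largePaths_zero]
  | succ k =>
    have hfin (j : ℕ) (hj : j ≤ k) : Finite (largePaths j) := (ih j (by omega)).to_subtype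
    have : ∀ p : antidiagonal k, Finite (largePaths p.1.1 × largePaths p.1.2) := fun p => by
      have := mem_antidiagonal.1 p.2
      have := hfin p.1.1 (by omega); have := hfin p.1.2 (by omega)
      infer_instance
    have := hfin k le_rfl
    rw [← range_sumElim_largePaths]
    exact Set.finite_range _

lemma finite_smallPaths (k : ℕ) : (smallPaths k).Finite :=
  (finite_largePaths k).subset fun _ h => h.1

lemma card_largePaths_succ (k : ℕ) : Nat.card (largePaths (k + 1)) = Nat.card (largePaths k) +
    ∑ p ∈ antidiagonal k, Nat.card (largePaths p.1) * Nat.card (largePaths p.2) := by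
  have := fun j => (finite_largePaths j).to_subtype
  rw [← range_sumElim_largePaths,
    Nat.card_range_of_injective (sumElim_levelCons_archMap_injective k), Nat.card_sum,
    Nat.card_sigma]
  simp only [Nat.card_prod]
  rw [sum_coe_sort (antidiagonal k) fun p => Nat.card (largePaths p.1) * Nat.card (largePaths p.2)]

lemma card_smallPaths_succ (k : ℕ) : Nat.card (smallPaths (k + 1)) =
    ∑ p ∈ antidiagonal k, Nat.card (largePaths p.1) * Nat.card (smallPaths p.2) := by
  have := fun j => (finite_largePaths j).to_subtype
  have := fun j => (finite_smallPaths j).to_subtype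
  rw [← range_archMap_smallPaths, Nat.card_range_of_injective (archMap_injective k _),
    Nat.card_sigma]
  simp only [Nat.card_prod]
  rw [sum_coe_sort (antidiagonal k) fun p => Nat.card (largePaths p.1) * Nat.card (smallPaths p.2)]

/-- Total weight of the Motzkin paths with `k` steps from height `i` to height `j`, where up
steps weigh `1`, level steps `3` and down steps `2`. -/
def weightedMotzkin : ℕ → ℕ → ℕ → ℤ
  | 0, i, j => if i = j then 1 else 0
  | k + 1, i, 0 => 3 * weightedMotzkin k i 0 + 2 * weightedMotzkin k i 1
  | k + 1, i, j + 1 =>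
      weightedMotzkin k i j + 3 * weightedMotzkin k i (j + 1) + 2 * weightedMotzkin k i (j + 2)

namespace weightedMotzkin

lemma succ_left (k i j : ℕ) :
    weightedMotzkin (k + 1) i j =
      2 * (if i = 0 then 0 else weightedMotzkin k (i - 1) j) + 3 * weightedMotzkin k i j +
        weightedMotzkin k (i + 1) j := by
  induction k generalizing i j with
  | zero =>
    rcases i with _ | _ | i <;> rcases j with _ | _ | j <;> simp [weightedMotzkin]
    omega
  | succ k ih =>
    rcases i with _ | i <;> rcases j with _ | j
    all_goals
      conv_lhs => rw [weightedMotzkin]; simp only [ih]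
      simp [weightedMotzkin]
      ring

lemma eq_zero_of_lt {k i j : ℕ} (h : i + k < j) : weightedMotzkin k i j = 0 := by
  induction k generalizing j with
  | zero => simp [weightedMotzkin]; omega
  | succ k ih =>
    obtain ⟨j, rfl⟩ : ∃ j', j = j' + 1 := ⟨j - 1, by omega⟩
    simp only [weightedMotzkin, ih (by omega : i + k < j), ih (by omega : i + k < j + 1),
      ih (by omega : i + k < j + 2)]
    ring

lemma self_add (k i : ℕ) : weightedMotzkin k i (i + k) = 1 := by
  induction k with
  | zero => simp [weightedMotzkin]
  | succ k ih =>
    rw [← add_assoc, weightedMotzkin, ih, eq_zero_of_lt (by omega), eq_zero_of_lt (by omega)]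
    ring

/-- Reversing a path swaps its up steps, of weight `1`, and its down steps, of weight `2`. -/
lemma two_pow_mul_comm (k i j : ℕ) :
    2 ^ j * weightedMotzkin k i j = 2 ^ i * weightedMotzkin k j i := by
  induction k generalizing i j with
  | zero => by_cases h : i = j <;> simp [weightedMotzkin, h, eq_comm]
  | succ k ih =>
    rw [succ_left k j i]
    rcases j with _ | j
    · simp only [weightedMotzkin, if_true]
      linear_combination 3 * ih i 0 + ih i 1
    · simp only [weightedMotzkin, add_tsub_cancel_right, add_eq_zero, one_ne_zero, and_false,
        if_false]
      linear_combination 2 * ih i j + 3 * ih i (j + 1) + ih i (j + 2)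

/-- Chapman–Kolmogorov: split a path after its first `a` steps. -/
lemma add_eq_sum (a b i j N : ℕ) (hN : i + a < N) :
    weightedMotzkin (a + b) i j = ∑ h ∈ range N, weightedMotzkin a i h * weightedMotzkin b h j := by
  induction b generalizing j with
  | zero =>
    by_cases hj : j < N
    · rw [sum_eq_single_of_mem j (mem_range.2 hj) (fun h _ hne => by simp [weightedMotzkin, hne])]
      simp [weightedMotzkin]
    · rw [add_zero, eq_zero_of_lt (by omega), sum_eq_zero]
      intro h hh
      simp [weightedMotzkin, show h ≠ j by simp at hh; omega]
  | succ b ih =>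
    rw [← add_assoc]
    rcases j with _ | j <;>
    · simp only [weightedMotzkin, ih, mul_sum, ← sum_add_distrib]
      exact sum_congr rfl fun _ _ => by ring

/-- First passage decomposition: a path from `i + 1` down to `0` stays at height `≥ i + 1` for
some steps, then steps down to `i` and continues to `0`. -/
lemma succ_succ_zero (k i : ℕ) :
    weightedMotzkin (k + 1) (i + 1) 0 =
      2 * ∑ p ∈ antidiagonal k, weightedMotzkin p.1 0 0 * weightedMotzkin p.2 i 0 := by
  induction k generalizing i with
  | zero => simp [weightedMotzkin]
  | succ k ih =>
    let conv (j : ℕ) := ∑ p ∈ antidiagonal k, weightedMotzkin p.1 0 0 * weightedMotzkin p.2 j 0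
    have hconv (j : ℕ) :
        ∑ p ∈ antidiagonal k, weightedMotzkin p.1 0 0 * weightedMotzkin (p.2 + 1) j 0 =
          2 * (if j = 0 then 0 else conv (j - 1)) + 3 * conv j + conv (j + 1) := by
      simp only [conv, succ_left, mul_add, sum_add_distrib]
      split_ifs <;> simp [mul_sum, mul_left_comm]
    rw [succ_left (k + 1), Nat.sum_antidiagonal_succ', hconv]
    rcases i with _ | i
    · simp [weightedMotzkin.eq_1, ih]; ring
    · simp [weightedMotzkin.eq_1, ih]; ring

lemma add_two_zero_zero (k : ℕ) :
    weightedMotzkin (k + 2) 0 0 = 3 * weightedMotzkin (k + 1) 0 0 +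
      2 * ∑ p ∈ antidiagonal k, weightedMotzkin p.1 0 0 * weightedMotzkin p.2 0 0 := by
  rw [succ_left, succ_succ_zero]
  simp

end weightedMotzkin

lemma Finset.Nat.sum_antidiagonal_add_two {M : Type*} [AddCommMonoid M] (f : ℕ × ℕ → M)
    (k : ℕ) : ∑ p ∈ antidiagonal (k + 2), f p =
      f (k + 2, 0) + f (0, k + 2) + ∑ p ∈ antidiagonal k, f (p.1 + 1, p.2 + 1) := by
  rw [Nat.sum_antidiagonal_succ', Nat.sum_antidiagonal_succ, ← add_assoc]

/-- In generating functions the recursions read `S = 1 + x R S` and `R = 1 + x R + x R²`. They are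
solved by `S = 1 + x M` and `R = 1 + 2 x M`, where `M = 1 + 3 x M + 2 x² M²` is the generating
function of `weightedMotzkin k 0 0`. -/
theorem eq_weightedMotzkin_of_rec {s r : ℕ → ℤ} (hs0 : s 0 = 1) (hr0 : r 0 = 1)
    (hs : ∀ k, s (k + 1) = ∑ p ∈ antidiagonal k, r p.1 * s p.2)
    (hr : ∀ k, r (k + 1) = r k + ∑ p ∈ antidiagonal k, r p.1 * r p.2) (k : ℕ) :
    s (k + 1) = weightedMotzkin k 0 0 ∧ r (k + 1) = 2 * weightedMotzkin k 0 0 := by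
  induction k using Nat.strong_induction_on with
  | _ k ih =>
  match k with
  | 0 => simp [hs, hr, hs0, hr0, weightedMotzkin]
  | 1 => simp [hs, hr, hs0, hr0, weightedMotzkin, Nat.sum_antidiagonal_succ]
  | k + 2 =>
    have hlt {p : ℕ × ℕ} (hp : p ∈ antidiagonal k) : p.1 < k + 2 ∧ p.2 < k + 2 := by
      rw [HasAntidiagonal.mem_antidiagonal] at hp; omega
    have hrs : ∑ p ∈ antidiagonal k, r (p.1 + 1) * s (p.2 + 1) =
        2 * ∑ p ∈ antidiagonal k, weightedMotzkin p.1 0 0 * weightedMotzkin p.2 0 0 := by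
      rw [mul_sum]
      refine sum_congr rfl fun p hp => ?_
      rw [(ih _ (hlt hp).1).2, (ih _ (hlt hp).2).1, mul_assoc]
    have hrr : ∑ p ∈ antidiagonal k, r (p.1 + 1) * r (p.2 + 1) =
        4 * ∑ p ∈ antidiagonal k, weightedMotzkin p.1 0 0 * weightedMotzkin p.2 0 0 := by
      rw [mul_sum]
      refine sum_congr rfl fun p hp => ?_
      rw [(ih _ (hlt hp).1).2, (ih _ (hlt hp).2).2]
      ring
    rw [hs, hr, Nat.sum_antidiagonal_add_two, Nat.sum_antidiagonal_add_two, hrs, hrr,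
      (ih (k + 1) (by omega)).1, (ih (k + 1) (by omega)).2, weightedMotzkin.add_two_zero_zero]
    constructor <;> simp [hs0, hr0] <;> ring

lemma det_weightedMotzkin_zero (n : ℕ) :
    (of fun i h : Fin n => weightedMotzkin i 0 h).det = 1 := by
  refine (det_of_isLowerTriangular _ fun i h hih => ?_).trans (prod_eq_one fun i _ => ?_)
  · exact weightedMotzkin.eq_zero_of_lt (by simpa using hih)
  · simpa using weightedMotzkin.self_add i 0

lemma det_hankel_weightedMotzkin (n : ℕ) :
    (of fun i j : Fin n => weightedMotzkin (i + j) 0 0).det = 2 ^ (n * (n - 1) / 2) := by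
  set A := of fun i h : Fin n => weightedMotzkin i 0 h
  have hfactor : (of fun i j : Fin n => weightedMotzkin (i + j) 0 0) =
      A * diagonal (fun h : Fin n => (2 : ℤ) ^ (h : ℕ)) * Aᵀ := by
    ext i j
    rw [of_apply, weightedMotzkin.add_eq_sum i j 0 0 n (by omega), ← Fin.sum_univ_eq_sum_range]
    refine sum_congr rfl fun h _ => ?_
    have hrev := weightedMotzkin.two_pow_mul_comm j 0 h
    simp only [pow_zero, one_mul] at hrev
    simp [A, ← hrev, mul_assoc]
  rw [hfactor, det_mul, det_mul, det_transpose, det_weightedMotzkin_zero, det_diagonal,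
    prod_pow_eq_pow_sum, Fin.sum_univ_eq_sum_range (fun h => h), sum_range_id, one_mul, mul_one]

lemma schS_succ (k : ℕ) : (schS (k + 1) : ℤ) = weightedMotzkin k 0 0 := by
  refine (eq_weightedMotzkin_of_rec (s := fun k => (schS k : ℤ)) (r := fun k => (schR k : ℤ))
    ?_ ?_ (fun k => ?_) (fun k => ?_) k).1
  · simp [schS_eq_card, smallPaths_zero]
  · simp [schR_eq_card, largePaths_zero]
  · simp only [schS_eq_card, schR_eq_card, card_smallPaths_succ]; push_cast; rfl
  · simp only [schR_eq_card, card_largePaths_succ]; push_cast; rfl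

theorem hankel_small_det_general (n : ℕ) :
    (Matrix.of fun i j : Fin n => (schS ((i : ℕ) + (j : ℕ) + 1) : ℤ)).det =
      2 ^ (n * (n - 1) / 2) := by
  simp only [schS_succ]
  exact det_hankel_weightedMotzkin n

/-- For `n ≥ 1`, `det [s_{i+j-1}] = 2^{n(n-1)/2}`. -/
theorem hankel_small_det (n : ℕ) (hn : 1 ≤ n) :
    (Matrix.of fun i j : Fin n => (schS ((i : ℕ) + (j : ℕ) + 1) : ℤ)).det =
      2 ^ (n * (n - 1) / 2) :=
  hankel_small_det_general n
end

section
/- For n ≥ 1, the Hankel determinant det[r_{i+j-2}]_{1≤i,j≤n} of the large Schröder numbers equals 2^{n(n-1)/2}. -/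
open Matrix

/-!
The large Schröder numbers are the moments of the J-fraction with level weights `2, 3, 3, …` and
down-step weights `2, 2, …`: `r m = T(m, 0)` for the triangle whose `m`-th row is obtained by
applying the tridiagonal operator `jacobiOp` `m` times to `e₀`. This operator is symmetric for the inner product with
weights `∏ i < k, b i = 2 ^ k`, so moving factors of `jacobiOp` across the inner product gives
`r (i + j) = ∑ k, 2 ^ k T(i, k) T(j, k)`, i.e. the Hankel matrix is `L D Lᵀ` with `L` lower
unitriangular and `D = diag (2 ^ k)`. To identify `r m` with `T(m, 0)`, both are shown to satisfy
`r (m + 1) = r m + ∑ i + j = m, r i r j`; for paths this is the first-return decomposition, made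
explicit by encoding paths as derivation trees of the grammar `S = ε | L S | U S D S`.
-/

open Finset

section Jacobi

variable {R : Type*} [CommSemiring R] (a b : ℕ → R)

def jacobiOp (f : ℕ → R) : ℕ → R
  | 0 => a 0 * f 0 + b 0 * f 1
  | k + 1 => f k + a (k + 1) * f (k + 1) + b (k + 1) * f (k + 2)

def jacobiTriangle (m : ℕ) : ℕ → R := (jacobiOp a b)^[m] (Pi.single 0 1)

def jacobiWeight (k : ℕ) : R := ∏ i ∈ range k, b i

variable {a b}

lemma jacobiTriangle_zero : jacobiTriangle a b 0 = Pi.single 0 1 := rfl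

lemma jacobiTriangle_succ (m : ℕ) :
    jacobiTriangle a b (m + 1) = jacobiOp a b (jacobiTriangle a b m) :=
  Function.iterate_succ_apply' _ _ _

lemma jacobiTriangle_eq_zero_of_lt {m k : ℕ} (h : m < k) : jacobiTriangle a b m k = 0 := by
  induction m generalizing k with
  | zero => simp [jacobiTriangle_zero, (Nat.zero_lt_of_lt h).ne']
  | succ m ih =>
    obtain _ | k := k
    · omega
    rw [jacobiTriangle_succ, jacobiOp, ih (by omega), ih (by omega), ih (by omega), mul_zero,
      mul_zero, add_zero, add_zero]

lemma jacobiTriangle_self (m : ℕ) : jacobiTriangle a b m m = 1 := by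
  induction m with
  | zero => simp [jacobiTriangle_zero]
  | succ m ih =>
    rw [jacobiTriangle_succ, jacobiOp, ih, jacobiTriangle_eq_zero_of_lt (by omega),
      jacobiTriangle_eq_zero_of_lt (by omega), mul_zero, mul_zero, add_zero, add_zero]

lemma jacobiWeight_succ (k : ℕ) : jacobiWeight b (k + 1) = jacobiWeight b k * b k :=
  prod_range_succ _ _

/-- The first and last sums are exchanged by swapping `f` and `g`, which is why `jacobiOp` is
symmetric for the weighted inner product. -/
lemma sum_weight_jacobiOp_mul {f g : ℕ → R} {N : ℕ} (hg : g N = 0) :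
    ∑ k ∈ range (N + 1), jacobiWeight b k * jacobiOp a b f k * g k =
      ∑ k ∈ range N, jacobiWeight b (k + 1) * f k * g (k + 1) +
      ∑ k ∈ range (N + 1), jacobiWeight b k * a k * f k * g k +
      ∑ k ∈ range N, jacobiWeight b (k + 1) * f (k + 1) * g k := by
  have hlast : ∑ k ∈ range (N + 1), jacobiWeight b (k + 1) * f (k + 1) * g k =
      ∑ k ∈ range N, jacobiWeight b (k + 1) * f (k + 1) * g k := by
    rw [sum_range_succ, hg, mul_zero, add_zero]
  have hstep (k : ℕ) : jacobiWeight b (k + 1) * jacobiOp a b f (k + 1) * g (k + 1) =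
      jacobiWeight b (k + 1) * f k * g (k + 1) +
      jacobiWeight b (k + 1) * a (k + 1) * f (k + 1) * g (k + 1) +
      jacobiWeight b (k + 1 + 1) * f (k + 1 + 1) * g (k + 1) := by
    rw [jacobiOp, jacobiWeight_succ (k + 1)]
    ring
  rw [← hlast, sum_range_succ', sum_congr rfl fun k _ => hstep k, sum_add_distrib,
    sum_add_distrib, sum_range_succ' _ N, sum_range_succ' (fun k => _ * f (k + 1) * g k)]
  simp only [jacobiWeight, range_zero, prod_empty, jacobiOp, one_mul, zero_add, range_one,
    prod_singleton]
  ring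

lemma sum_weight_jacobiOp_mul_comm {f g : ℕ → R} {N : ℕ} (hf : f N = 0) (hg : g N = 0) :
    ∑ k ∈ range (N + 1), jacobiWeight b k * jacobiOp a b f k * g k =
      ∑ k ∈ range (N + 1), jacobiWeight b k * f k * jacobiOp a b g k := by
  have hswap := sum_weight_jacobiOp_mul (a := a) (b := b) (f := g) (g := f) hf
  simp only [mul_right_comm _ (g _) (f _)] at hswap
  calc _ = ∑ k ∈ range (N + 1), jacobiWeight b k * jacobiOp a b g k * f k := by
        rw [sum_weight_jacobiOp_mul hg, hswap]
        ring
    _ = _ := sum_congr rfl fun k _ => mul_right_comm _ _ _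

lemma jacobiTriangle_add_zero_eq_sum (i j : ℕ) :
    jacobiTriangle a b (i + j) 0 = ∑ k ∈ range (i + j + 1),
      jacobiWeight b k * jacobiTriangle a b i k * jacobiTriangle a b j k := by
  induction j generalizing i with
  | zero =>
    rw [sum_range_succ', sum_eq_zero fun k _ => by simp [jacobiTriangle_zero]]
    simp [jacobiTriangle_zero, jacobiWeight]
  | succ j ih =>
    rw [← add_assoc, add_right_comm, ih, add_right_comm i, jacobiTriangle_succ,
      sum_weight_jacobiOp_mul_comm (jacobiTriangle_eq_zero_of_lt (by omega))
        (jacobiTriangle_eq_zero_of_lt (by omega)), ← jacobiTriangle_succ]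

lemma sum_range_weight_jacobiTriangle_mul {i N : ℕ} (g : ℕ → R) (h : i < N) :
    ∑ k ∈ range N, jacobiWeight b k * jacobiTriangle a b i k * g k =
      ∑ k ∈ range (i + 1), jacobiWeight b k * jacobiTriangle a b i k * g k :=
  (sum_subset (range_subset_range.2 h) fun k _ hk => by
    rw [jacobiTriangle_eq_zero_of_lt (by simpa using hk), mul_zero, zero_mul]).symm

end Jacobi

theorem det_hankel_jacobiTriangle {R : Type*} [CommRing R] (a b : ℕ → R) (n : ℕ) :
    (of fun i j : Fin n => jacobiTriangle a b (i + j) 0).det = ∏ k : Fin n, jacobiWeight b k := by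
  set L : Matrix (Fin n) (Fin n) R := of fun i k => jacobiTriangle a b i k
  have hL : L.det = 1 := by
    rw [det_of_isLowerTriangular L fun i k hik => jacobiTriangle_eq_zero_of_lt hik]
    exact prod_eq_one fun i _ => jacobiTriangle_self i
  have hfactor : (of fun i j : Fin n => jacobiTriangle a b (i + j) 0) =
      L * diagonal (fun k : Fin n => jacobiWeight b k) * Lᵀ := by
    ext i j
    rw [mul_apply]
    simp only [of_apply, mul_diagonal, transpose_apply, L]
    rw [jacobiTriangle_add_zero_eq_sum, sum_range_weight_jacobiTriangle_mul _ (by omega),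
      ← sum_range_weight_jacobiTriangle_mul _ i.isLt, ← Fin.sum_univ_eq_sum_range]
    exact sum_congr rfl fun k _ => by ring
  rw [hfactor, det_mul, det_mul, det_transpose, hL, det_diagonal, one_mul, mul_one]

lemma endpt_nil (p : Pt) : endpt p [] = p := rfl

lemma endpt_cons (p s : Pt) (l : List Pt) : endpt p (s :: l) = endpt (p + s) l := rfl

lemma endpt_append (p : Pt) (l₁ l₂ : List Pt) : endpt p (l₁ ++ l₂) = endpt (endpt p l₁) l₂ :=
  List.foldl_append

lemma pts_nil (p : Pt) : pts p [] = [p] := rfl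

lemma pts_cons (p s : Pt) (l : List Pt) : pts p (s :: l) = p :: pts (p + s) l :=
  List.scanl_cons

lemma self_mem_pts (p : Pt) (l : List Pt) : p ∈ pts p l := by
  cases l <;> simp [pts]

lemma mem_pts_append {v p : Pt} {l₁ l₂ : List Pt} :
    v ∈ pts p (l₁ ++ l₂) ↔ v ∈ pts p l₁ ∨ v ∈ pts (endpt p l₁) l₂ := by
  induction l₁ generalizing p with
  | nil =>
    rw [List.nil_append, pts_nil, endpt_nil, List.mem_singleton]
    exact ⟨Or.inr, fun h => h.elim (fun h => h ▸ self_mem_pts _ _) id⟩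
  | cons s l₁ ih => simp [pts_cons, endpt_cons, ih, or_assoc]

lemma exists_eq_append_down_cons {c : ℤ} :
    ∀ {q : Pt} {l : List Pt}, (∀ s ∈ l, s = (1, 1) ∨ s = (1, -1) ∨ s = (2, 0)) → c < q.2 →
      (endpt q l).2 ≤ c → ∃ l₁ l₂, l = l₁ ++ (1, -1) :: l₂ ∧ (∀ v ∈ pts q l₁, c < v.2) ∧
        (endpt q l₁).2 = c + 1
  | q, [], _, hq, hend => absurd hend (not_le.2 hq)
  | q, s :: l, hsteps, hq, hend => by
    by_cases hdown : s = (1, -1) ∧ q.2 = c + 1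
    · obtain ⟨rfl, hq'⟩ := hdown
      exact ⟨[], l, rfl, by simp [pts, hq], hq'⟩
    · have hq' : c < (q + s).2 := by
        rcases hsteps s List.mem_cons_self with rfl | rfl | rfl <;> simp at hdown ⊢ <;> omega
      obtain ⟨l₁, l₂, rfl, hpos, hlast⟩ :=
        exists_eq_append_down_cons (fun s hs => hsteps s (List.mem_cons_of_mem _ hs)) hq' hend
      exact ⟨s :: l₁, l₂, rfl, by simpa [pts_cons, hq] using hpos, hlast⟩

/-- Derivation trees of the grammar `S = ε | L S | U S D S`, which splits a large Schröder path
at its first return to the starting height. -/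
inductive SchroderTree
  | leaf
  | level (t : SchroderTree)
  | node (l r : SchroderTree)

namespace SchroderTree

def size : SchroderTree → ℕ
  | leaf => 0
  | level t => t.size + 1
  | node l r => l.size + r.size + 1

abbrev OfSize (k : ℕ) : Type := {t : SchroderTree // t.size = k}

def toSteps : SchroderTree → List Pt
  | leaf => []
  | level t => (2, 0) :: t.toSteps
  | node l r => (1, 1) :: (l.toSteps ++ (1, -1) :: r.toSteps)

lemma mem_toSteps {s : Pt} : ∀ {t : SchroderTree}, s ∈ t.toSteps →
    s = (1, 1) ∨ s = (1, -1) ∨ s = (2, 0)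
  | leaf, h => by simp [toSteps] at h
  | level t, h => by
    rcases List.mem_cons.1 h with rfl | h
    · simp
    · exact mem_toSteps h
  | node l r, h => by
    simp only [toSteps, List.mem_cons, List.mem_append] at h
    rcases h with rfl | h | rfl | h
    · simp
    · exact mem_toSteps h
    · simp
    · exact mem_toSteps h

lemma endpt_toSteps (p : Pt) :
    ∀ t : SchroderTree, endpt p t.toSteps = p + (2 * (t.size : ℤ), 0)
  | leaf => by simp [toSteps, size, endpt_nil]
  | level t => by
    rw [toSteps, endpt_cons, endpt_toSteps]
    ext
    · simp only [Prod.fst_add, size, Nat.cast_add, Nat.cast_one]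
      ring
    · simp
  | node l r => by
    rw [toSteps, endpt_cons, endpt_append, endpt_toSteps, endpt_cons, endpt_toSteps]
    ext
    · simp only [Prod.fst_add, size, Nat.cast_add, Nat.cast_one]
      ring
    · simp

lemma le_snd_of_mem_pts_toSteps {v : Pt} : ∀ {p : Pt} {t : SchroderTree},
    v ∈ pts p t.toSteps → p.2 ≤ v.2
  | p, leaf, h => by
    rw [toSteps, pts_nil, List.mem_singleton] at h
    rw [h]
  | p, level t, h => by
    rcases List.mem_cons.1 (pts_cons .. ▸ h) with rfl | h
    · rfl
    · simpa using le_snd_of_mem_pts_toSteps h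
  | p, node l r, h => by
    simp only [toSteps, pts_cons, List.mem_cons, mem_pts_append, endpt_toSteps] at h
    rcases h with rfl | h | rfl | h
    · rfl
    · have := le_snd_of_mem_pts_toSteps h
      simp only [Prod.snd_add] at this
      omega
    · simp
    · simpa using le_snd_of_mem_pts_toSteps h

/-- The continuations may only start with a down step, as the left subtree of a `node` is
followed by one; without such a restriction the statement fails (`leaf ++ L = level leaf`). -/
lemma toSteps_append_inj : ∀ {t t' : SchroderTree} {l l' : List Pt},
    (∀ s ∈ l.head?, s = (1, -1)) → (∀ s ∈ l'.head?, s = (1, -1)) →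
    t.toSteps ++ l = t'.toSteps ++ l' → t = t' ∧ l = l'
  | leaf, leaf, _, _, _, _, h => ⟨rfl, h⟩
  | leaf, level _, _, _, hl, _, h | leaf, node _ _, _, _, hl, _, h
  | level _, leaf, _, _, _, hl, h | node _ _, leaf, _, _, _, hl, h => by
    simp only [toSteps, List.nil_append, List.cons_append] at h
    subst h
    simp at hl
  | level _, node _ _, _, _, _, _, h | node _ _, level _, _, _, _, _, h => by
    simp [toSteps] at h
  | level t, level t', _, _, hl, hl', h => by
    simp only [toSteps, List.cons_append, List.cons.injEq, true_and] at h
    obtain ⟨rfl, rfl⟩ := toSteps_append_inj hl hl' h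
    exact ⟨rfl, rfl⟩
  | node l r, node l' r', _, _, hl, hl', h => by
    simp only [toSteps, List.cons_append, List.append_assoc, List.cons.injEq, true_and] at h
    obtain ⟨rfl, hrest⟩ := toSteps_append_inj (by simp) (by simp) h
    obtain ⟨rfl, rfl⟩ := toSteps_append_inj hl hl' (List.cons.inj hrest).2
    exact ⟨rfl, rfl⟩

lemma toSteps_injective : Function.Injective toSteps := fun t t' h =>
  (toSteps_append_inj (l := []) (l' := []) (by simp) (by simp) (by simpa using h)).1

lemma exists_toSteps_eq : ∀ {p : Pt} {l : List Pt},
    (∀ s ∈ l, s = (1, 1) ∨ s = (1, -1) ∨ s = (2, 0)) → (∀ v ∈ pts p l, p.2 ≤ v.2) →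
      (endpt p l).2 = p.2 → ∃ t : SchroderTree, t.toSteps = l
  | _, [], _, _, _ => ⟨leaf, rfl⟩
  | p, s :: l, hsteps, hpos, hend => by
    have hsteps' := fun s hs => hsteps s (List.mem_cons_of_mem _ hs)
    have hpos' : ∀ v ∈ pts (p + s) l, p.2 ≤ v.2 := fun v hv =>
      hpos v (by rw [pts_cons]; exact List.mem_cons_of_mem _ hv)
    rcases hsteps s List.mem_cons_self with rfl | rfl | rfl
    · obtain ⟨l₁, l₂, rfl, hpos₁, hend₁⟩ :=
        exists_eq_append_down_cons (c := p.2) hsteps' (by simp) hend.le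
      obtain ⟨t₁, rfl⟩ := exists_toSteps_eq (p := p + (1, 1)) (l := l₁)
        (fun s hs => hsteps' s (List.mem_append_left _ hs))
        (fun v hv => by simpa [Int.add_one_le_iff] using hpos₁ v hv) (by simpa using hend₁)
      obtain ⟨t₂, rfl⟩ := exists_toSteps_eq (l := l₂)
        (p := endpt (p + (1, 1)) t₁.toSteps + (1, -1))
        (fun s hs => hsteps' s (List.mem_append_right _ (List.mem_cons_of_mem _ hs)))
        (fun v hv => by
          have := hpos' v <| mem_pts_append.2 <| Or.inr <| by
            rw [pts_cons]; exact List.mem_cons_of_mem _ hv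
          simpa [hend₁] using this)
        (by simpa [hend₁, endpt_cons, endpt_append] using hend)
      exact ⟨node t₁ t₂, rfl⟩
    · have := hpos (p + (1, -1)) <| by
        rw [pts_cons]; exact List.mem_cons_of_mem _ (self_mem_pts _ _)
      simp at this
    · obtain ⟨t, rfl⟩ := exists_toSteps_eq (p := p + (2, 0)) hsteps' (by simpa using hpos')
        (by simpa [endpt_cons] using hend)
      exact ⟨level t, rfl⟩
termination_by _ l => l.length

lemma isLargePath_toSteps (t : SchroderTree) :
    IsLargePath (0, 0) (2 * (t.size : ℤ), 0) t.toSteps :=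
  ⟨fun _ => mem_toSteps, fun _ => le_snd_of_mem_pts_toSteps, by simp [endpt_toSteps]⟩

noncomputable def equivLargePath (k : ℕ) :
    OfSize k ≃ {l : List Pt // IsLargePath (0, 0) (2 * k, 0) l} :=
  Equiv.ofBijective (fun t => ⟨t.1.toSteps, by simpa [t.2] using t.1.isLargePath_toSteps⟩) <| by
    refine ⟨fun t t' h => Subtype.ext (toSteps_injective (congrArg Subtype.val h)), ?_⟩
    rintro ⟨l, hsteps, hpos, hend⟩
    obtain ⟨t, rfl⟩ := exists_toSteps_eq hsteps hpos (by rw [hend])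
    refine ⟨⟨t, ?_⟩, rfl⟩
    have := congrArg Prod.fst ((endpt_toSteps _ t).symm.trans hend)
    simp only [Prod.fst_add, zero_add] at this
    omega

lemma size_eq_zero {t : SchroderTree} : t.size = 0 ↔ t = leaf := by
  cases t <;> simp [size]

instance : Unique (OfSize 0) :=
  ⟨⟨⟨leaf, rfl⟩⟩, fun t => Subtype.ext (size_eq_zero.1 t.2)⟩

def ofRoot (k : ℕ) :
    OfSize k ⊕ (Σ p : antidiagonal k, OfSize p.1.1 × OfSize p.1.2) → OfSize (k + 1)
  | .inl t => ⟨level t.1, by simp [size, t.2]⟩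
  | .inr ⟨p, t₁, t₂⟩ => ⟨node t₁.1 t₂.1, by simp [size, t₁.2, t₂.2, mem_antidiagonal.1 p.2]⟩

lemma ofRoot_bijective (k : ℕ) : Function.Bijective (ofRoot k) := by
  refine ⟨?_, ?_⟩
  · rintro (⟨t, ht⟩ | ⟨⟨⟨i, j⟩, hij⟩, ⟨t₁, h₁⟩, ⟨t₂, h₂⟩⟩)
      (⟨t', ht'⟩ | ⟨⟨⟨i', j'⟩, hij'⟩, ⟨t₁', h₁'⟩, ⟨t₂', h₂'⟩⟩) h <;>
      simp only [ofRoot, Subtype.mk.injEq, reduceCtorEq, level.injEq, node.injEq] at h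
    · subst h
      rfl
    · obtain ⟨rfl, rfl⟩ := h
      dsimp only at h₁ h₂ h₁' h₂'
      subst h₁ h₂ h₁' h₂'
      rfl
  · rintro ⟨_ | t | ⟨t₁, t₂⟩, h⟩
    · simp [size] at h
    · exact ⟨.inl ⟨t, by simpa [size] using h⟩, rfl⟩
    · exact ⟨.inr ⟨⟨(t₁.size, t₂.size), by simpa [size] using h⟩, ⟨t₁, rfl⟩, ⟨t₂, rfl⟩⟩, rfl⟩

lemma finite_ofSize (k : ℕ) : Finite (OfSize k) := by
  induction k using Nat.strong_induction_on with
  | _ k ih =>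
    cases k with
    | zero => infer_instance
    | succ k =>
      have := ih k k.lt_succ_self
      have (p : antidiagonal k) : Finite (OfSize p.1.1) :=
        ih _ (by have := mem_antidiagonal.1 p.2; omega)
      have (p : antidiagonal k) : Finite (OfSize p.1.2) :=
        ih _ (by have := mem_antidiagonal.1 p.2; omega)
      exact Finite.of_surjective _ (ofRoot_bijective k).2

lemma card_ofSize_succ (k : ℕ) : Nat.card (OfSize (k + 1)) =
    Nat.card (OfSize k) + ∑ p ∈ antidiagonal k, Nat.card (OfSize p.1) * Nat.card (OfSize p.2) := by
  have := finite_ofSize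
  rw [← Nat.card_eq_of_bijective _ (ofRoot_bijective k), Nat.card_sum, Nat.card_sigma,
    ← sum_coe_sort (antidiagonal k)]
  simp only [Nat.card_prod]

end SchroderTree

lemma schR_eq_card_ofSize (k : ℕ) : schR k = Nat.card (SchroderTree.OfSize k) :=
  (Nat.card_congr (SchroderTree.equivLargePath k)).symm

lemma schR_zero : schR 0 = 1 := by
  rw [schR_eq_card_ofSize, Nat.card_unique]

lemma schR_succ (k : ℕ) : schR (k + 1) = schR k + ∑ p ∈ antidiagonal k, schR p.1 * schR p.2 := by
  simp only [schR_eq_card_ofSize, SchroderTree.card_ofSize_succ]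

abbrev schroderTriangle : ℕ → ℕ → ℤ := jacobiTriangle (fun k => if k = 0 then 2 else 3) fun _ => 2

lemma schroderTriangle_zero_apply (k : ℕ) : schroderTriangle 0 k = if k = 0 then 1 else 0 := by
  simp [jacobiTriangle_zero, Pi.single_apply]

lemma schroderTriangle_succ_zero (m : ℕ) :
    schroderTriangle (m + 1) 0 = 2 * schroderTriangle m 0 + 2 * schroderTriangle m 1 := by
  simp [jacobiTriangle_succ, jacobiOp]

lemma schroderTriangle_succ_succ (m k : ℕ) :
    schroderTriangle (m + 1) (k + 1) = schroderTriangle m k + 3 * schroderTriangle m (k + 1) +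
      2 * schroderTriangle m (k + 2) := by
  simp [jacobiTriangle_succ, jacobiOp]

lemma sum_antidiagonal_schroderTriangle (m k : ℕ) :
    ∑ p ∈ antidiagonal m, schroderTriangle (p.1 + 1) 0 * schroderTriangle p.2 k =
      2 * schroderTriangle (m + 1) (k + 1) := by
  induction m generalizing k with
  | zero =>
    simp [schroderTriangle_succ_zero, schroderTriangle_succ_succ, schroderTriangle_zero_apply]
  | succ m ih =>
    rw [Nat.sum_antidiagonal_succ']
    cases k with
    | zero =>
      have hsplit : ∀ p ∈ antidiagonal m,
          schroderTriangle (p.1 + 1) 0 * schroderTriangle (p.2 + 1) 0 =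
            2 * (schroderTriangle (p.1 + 1) 0 * schroderTriangle p.2 0) +
              2 * (schroderTriangle (p.1 + 1) 0 * schroderTriangle p.2 1) := fun p _ => by
        rw [schroderTriangle_succ_zero p.2]
        ring
      rw [sum_congr rfl hsplit, sum_add_distrib, ← mul_sum, ← mul_sum, ih, ih,
        schroderTriangle_succ_zero (m + 1), schroderTriangle_succ_succ (m + 1),
        schroderTriangle_zero_apply, if_pos rfl]
      ring
    | succ k =>
      have hsplit : ∀ p ∈ antidiagonal m,
          schroderTriangle (p.1 + 1) 0 * schroderTriangle (p.2 + 1) (k + 1) =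
            schroderTriangle (p.1 + 1) 0 * schroderTriangle p.2 k +
              3 * (schroderTriangle (p.1 + 1) 0 * schroderTriangle p.2 (k + 1)) +
              2 * (schroderTriangle (p.1 + 1) 0 * schroderTriangle p.2 (k + 2)) := fun p _ => by
        rw [schroderTriangle_succ_succ p.2]
        ring
      rw [sum_congr rfl hsplit, sum_add_distrib, sum_add_distrib, ← mul_sum, ← mul_sum, ih, ih,
        ih, schroderTriangle_succ_succ (m + 1), schroderTriangle_zero_apply,
        if_neg (Nat.add_one_ne_zero k)]
      ring

lemma schroderTriangle_succ_zero_eq_sum (m : ℕ) :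
    schroderTriangle (m + 1) 0 = schroderTriangle m 0 +
      ∑ p ∈ antidiagonal m, schroderTriangle p.1 0 * schroderTriangle p.2 0 := by
  rw [schroderTriangle_succ_zero]
  cases m with
  | zero => simp [schroderTriangle_zero_apply]
  | succ m =>
    rw [Nat.sum_antidiagonal_succ, ← sum_antidiagonal_schroderTriangle,
      schroderTriangle_zero_apply, if_pos rfl, one_mul]
    ring

lemma schR_eq_schroderTriangle (m : ℕ) : (schR m : ℤ) = schroderTriangle m 0 := by
  induction m using Nat.strong_induction_on with
  | _ m ih =>
    cases m with
    | zero => simp [schR_zero, schroderTriangle_zero_apply]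
    | succ m =>
      rw [schR_succ, schroderTriangle_succ_zero_eq_sum, ← ih m m.lt_succ_self]
      push_cast
      refine congrArg _ (sum_congr rfl fun p hp => ?_)
      have := mem_antidiagonal.1 hp
      rw [ih p.1 (by omega), ih p.2 (by omega)]

theorem hankel_large_det_shift_general (n : ℕ) :
    (Matrix.of fun i j : Fin n => (schR ((i : ℕ) + (j : ℕ)) : ℤ)).det =
      2 ^ (n * (n - 1) / 2) := by
  simp only [schR_eq_schroderTriangle, det_hankel_jacobiTriangle, jacobiWeight, prod_const,
    card_range]
  rw [Fin.prod_univ_eq_prod_range (fun k => (2 : ℤ) ^ k), prod_pow_eq_pow_sum, sum_range_id]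

/-- For `n ≥ 1`, `det [r_{i+j-2}] = 2^{n(n-1)/2}`. -/
theorem hankel_large_det_shift (n : ℕ) (hn : 1 ≤ n) :
    (Matrix.of fun i j : Fin n => (schR ((i : ℕ) + (j : ℕ)) : ℤ)).det =
      2 ^ (n * (n - 1) / 2) :=
  hankel_large_det_shift_general n
end
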